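/- Optimal critic recovers the sPCE bound: if U*(h_T, θ) = log p(h_T | θ, π) + c(h_T) for an arbitrary function c depending only on h_T, then the InfoNCE objective L_T^NCE(π, U*; L) equals the sequential Prior Contrastive Estimation bound L_T^sPCE(π, L) = E_{p(θ_{0:L}) p(h_T | θ₀, π)}[log( p(h_T | θ₀, π) / ((1/(L+1)) Σ_{ℓ=0}^L p(h_T | θ_ℓ, π)) )]. -/
import Mathlib


open Finset
open scoped Classical

noncomputable section

namespace Stmt8

/-- The InfoNCE objective
`L_T^NCE(π, U; L) = E_{p(θ_{0:L}) p(h_T|θ₀,π)}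
  [log( exp U(h_T,θ₀) / ((1/(L+1)) Σ_{i=0}^L exp U(h_T,θ_i)) )]`,
with `θ₀,...,θ_L` i.i.d. from the prior and `h_T ∼ p(·|θ₀,π)`. -/
def nce {Θsp Hsp : Type*} [Fintype Θsp] [Fintype Hsp]
    (prior : Θsp → ℝ) (lik : Θsp → Hsp → ℝ) (U : Hsp → Θsp → ℝ) (L : ℕ) : ℝ :=
  ∑ θs : Fin (L+1) → Θsp, (∏ i, prior (θs i)) *
    ∑ h, lik (θs 0) h *
      Real.log (Real.exp (U h (θs 0)) /
        ((1/((L : ℝ)+1)) * ∑ i, Real.exp (U h (θs i))))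

/-- The sequential Prior Contrastive Estimation (sPCE) bound
`L_T^sPCE(π, L) = E_{p(θ_{0:L}) p(h_T|θ₀,π)}
  [log( p(h_T|θ₀,π) / ((1/(L+1)) Σ_{ℓ=0}^L p(h_T|θ_ℓ,π)) )]`. -/
def spce {Θsp Hsp : Type*} [Fintype Θsp] [Fintype Hsp]
    (prior : Θsp → ℝ) (lik : Θsp → Hsp → ℝ) (L : ℕ) : ℝ :=
  ∑ θs : Fin (L+1) → Θsp, (∏ i, prior (θs i)) *
    ∑ h, lik (θs 0) h *
      Real.log (lik (θs 0) h / ((1/((L : ℝ)+1)) * ∑ i, lik (θs i) h))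

/-- Optimal critic recovers the sPCE bound: if
`U*(h_T, θ) = log p(h_T|θ,π) + c(h_T)` for an arbitrary function `c` of the
history only, then `L_T^NCE(π, U*; L) = L_T^sPCE(π, L)`. -/
theorem optimal_critic_recovers_spce
    {Θsp Hsp : Type*} [Fintype Θsp] [Fintype Hsp]
    (prior : Θsp → ℝ) (lik : Θsp → Hsp → ℝ)
    (hpr : ∀ θ, 0 ≤ prior θ) (hprs : ∑ θ, prior θ = 1)
    (hlik : ∀ θ h, 0 < lik θ h) (hliks : ∀ θ, ∑ h, lik θ h = 1)
    (c : Hsp → ℝ) (L : ℕ) :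
    nce prior lik (fun h θ => Real.log (lik θ h) + c h) L = spce prior lik L := by
  unfold nce spce
  refine Finset.sum_congr rfl fun θs _ => ?_
  congr 1
  refine Finset.sum_congr rfl fun h _ => ?_
  congr 2
  have he : ∀ θ, Real.exp (Real.log (lik θ h) + c h) = lik θ h * Real.exp (c h) := by
    intro θ
    rw [Real.exp_add, Real.exp_log (hlik θ h)]
  simp only [he]
  rw [← Finset.sum_mul]
  have hE : Real.exp (c h) ≠ 0 := Real.exp_ne_zero _
  have hrw : (1/((L:ℝ)+1)) * ((∑ i, lik (θs i) h) * Real.exp (c h))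
      = ((1/((L:ℝ)+1)) * ∑ i, lik (θs i) h) * Real.exp (c h) := by ring
  rw [hrw, mul_div_mul_right _ _ hE]

end Stmt8
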